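/- If the incoming flow is strictly feasible, i.e., f_i(f̄_0, r̄) < F_i^d for all i, then the set of equilibrium density vectors consists of the single vector n^u with components n_i^u = f̄_i/(β_i^f v_i). -/

import Mathlib

/-- Data of the freeway Cell Transmission Model with `K` mainline links
(indices `1,…,K`), an entrance link `0` and an exit link `K+1`. -/
structure Freeway where
  K : ℕ
  /-- free-flow speeds -/
  v : ℕ → ℝ
  /-- congestion wave speeds -/
  w : ℕ → ℝ
  /-- maximal numbers of vehicles -/
  Nmax : ℕ → ℝ
  /-- link capacities -/
  Fcap : ℕ → ℝ
  /-- outflow capacities `F_i^d` -/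
  Fd : ℕ → ℝ
  /-- entrance capacity `F_0` -/
  F0 : ℝ
  /-- on-ramp capacities `R_i` -/
  R : ℕ → ℝ
  /-- mainline split ratios `β_i^f` -/
  betaf : ℕ → ℝ
  /-- mainline priority `p_{i-1}^f` at node `i` -/
  pF : ℕ → ℝ
  /-- on-ramp priority `p_i^r` at node `i` -/
  pR : ℕ → ℝ
  /-- entrance demand flow `f_{-1}` -/
  fin : ℝ
  /-- on-ramp demands `d_i` -/
  d : ℕ → ℝ
  hv : ∀ i, 0 < v i
  hw : ∀ i, 0 < w i
  hbeta : ∀ i, 0 < betaf i ∧ betaf i ≤ 1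
  hp : ∀ i, 0 ≤ pF i ∧ 0 ≤ pR i ∧ pF i + pR i = 1
  hd : ∀ i, 0 ≤ d i
  hR : ∀ i, 0 ≤ R i
  hfin : 0 ≤ fin
  hF0 : 0 ≤ F0
  hFd : ∀ i, 0 < Fd i ∧ Fd i ≤ betaf i * Fcap i
  /-- the free-flow no-constraint condition `F/v + F/w ≤ N` -/
  hN : ∀ i, Fcap i / v i + Fcap i / w i ≤ Nmax i

/-- The merge node model (Tampère et al.) for one mainline input and one
on-ramp input: demands `fd, rd`, supply `fs`, priorities `pf, pr`. -/
noncomputable def mergeFlow (fd rd fs pf pr : ℝ) : ℝ × ℝ :=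
  if fd + rd ≤ fs then (fd, rd)
  else if fd ≤ pf * fs then (fd, fs - fd)
  else if rd ≤ pr * fs then (fs - rd, rd)
  else (pf * fs, pr * fs)

/-- Outflow demand of mainline link `i` with occupancy `n i`. -/
noncomputable def fdem (fw : Freeway) (n : ℕ → ℝ) (i : ℕ) : ℝ :=
  min (fw.betaf i * fw.v i * n i) (fw.Fd i)

/-- Inflow supply of mainline link `i` with occupancy `n i`. -/
noncomputable def fsup (fw : Freeway) (n : ℕ → ℝ) (i : ℕ) : ℝ :=
  min (fw.w i * (fw.Nmax i - n i)) (fw.Fcap i)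

/-- `(n, f, r)` is an equilibrium of the freeway model: there are a constant
entrance demand `fdem0` and constant ramp demands `rdem` (coming from fixed or
steadily growing queues) such that all node flows reproduce themselves, the
densities are constant (`f i = β_i^f (f (i-1) + r i)`) and the exit link is
uncongested. -/
def IsEquilibrium (fw : Freeway) (n f r : ℕ → ℝ) : Prop :=
  ∃ fdem0 : ℝ, ∃ rdem : ℕ → ℝ,
    -- entrance: queue constant (`f 0 = fin`) or growing (demand saturated)
    ((f 0 = fw.fin ∨ fdem0 = fw.F0) ∧ f 0 ≤ fdem0 ∧ fdem0 ≤ fw.F0 ∧ f 0 ≤ fw.fin) ∧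
    -- on-ramps: queue constant (`r i = d i`) or growing (demand saturated)
    (∀ i, 1 ≤ i → i ≤ fw.K →
      (r i = fw.d i ∨ rdem i = fw.R i) ∧ r i ≤ rdem i ∧ rdem i ≤ fw.R i ∧ r i ≤ fw.d i) ∧
    -- no on-ramp at the last node
    rdem (fw.K + 1) = 0 ∧
    -- density bounds
    (∀ i, 1 ≤ i → i ≤ fw.K + 1 → 0 ≤ n i ∧ n i ≤ fw.Nmax i) ∧
    -- node flows given by the merge node model
    (∀ i, 1 ≤ i → i ≤ fw.K + 1 →
      (f (i - 1), r i) =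
        mergeFlow (if i = 1 then fdem0 else fdem fw n (i - 1)) (rdem i)
          (fsup fw n i) (fw.pF i) (fw.pR i)) ∧
    -- constant densities: conservation at every link
    (∀ i, 1 ≤ i → i ≤ fw.K + 1 → f i = fw.betaf i * (f (i - 1) + r i)) ∧
    -- the exit link is uncongested and discharges its demand
    fw.v (fw.K + 1) * n (fw.K + 1) ≤ fw.Fcap (fw.K + 1) ∧
    f (fw.K + 1) = fdem fw n (fw.K + 1)

/-- Maximum on-ramp flows `r̄_i = min{d_i, R_i}` (and `0` outside `1,…,K`). -/
noncomputable def rbar (fw : Freeway) (i : ℕ) : ℝ :=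
  if 1 ≤ i ∧ i ≤ fw.K then min (fw.d i) (fw.R i) else 0

/-- Maximum flows `f̄`: `f̄_0 = min{f_{-1}, F_0}`,
`f̄_i = min{β_i^f (f̄_{i-1} + r̄_i), F_i^d}`. -/
noncomputable def fbar (fw : Freeway) : ℕ → ℝ
  | 0 => min fw.fin fw.F0
  | i + 1 => min (fw.betaf (i + 1) * (fbar fw i + rbar fw (i + 1))) (fw.Fd (i + 1))

/-- The uncapacitated flows `f_i(f̄_0, r̄)` obtained by propagating the maximal
entrance flows through the split ratios with no capacity constraints. -/
noncomputable def flin (fw : Freeway) : ℕ → ℝ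
  | 0 => min fw.fin fw.F0
  | i + 1 => fw.betaf (i + 1) * (flin fw i + rbar fw (i + 1))

/-! Under strict feasibility every equilibrium flow is bounded by the uncapacitated flow
`f_i(f̄_0, r̄)`, hence lies strictly below the outflow capacity `F_i^d`. Going upstream from
the exit link, which discharges its demand, each link is therefore in free flow: its density
is `f_i / (β_i^f v_i)`, so by `F/v + F/w ≤ N` its supply is its full capacity, which exceeds
its inflow. The merge node upstream then serves both of its demands, so the next link upstream
again discharges its demand. Once every demand is served, the entrance and ramp flows are the
maximal ones, which forces `f_i = f_i(f̄_0, r̄)` and `n_i = f_i / (β_i^f v_i)`. -/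

section MergeFlow

variable {fd rd fs pf pr : ℝ}

lemma mergeFlow_snd_le : (mergeFlow fd rd fs pf pr).2 ≤ rd := by
  unfold mergeFlow
  split_ifs <;> dsimp only <;> linarith

lemma mergeFlow_eq_of_add_lt (hp : pf + pr = 1)
    (h : (mergeFlow fd rd fs pf pr).1 + (mergeFlow fd rd fs pf pr).2 < fs) :
    mergeFlow fd rd fs pf pr = (fd, rd) := by
  unfold mergeFlow at h ⊢
  split_ifs at h ⊢
  · rfl
  all_goals dsimp only at h
  · linarith
  · linarith
  · rw [← add_mul, hp, one_mul] at h
    exact absurd h (lt_irrefl _)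

end MergeFlow

lemma eq_min_of_eq_demand {x D a b : ℝ} (h : (x = a ∨ D = b) ∧ x ≤ D ∧ D ≤ b ∧ x ≤ a)
    (hx : x = D) : x = min a b := by
  obtain ⟨hsat, -, hDb, hxa⟩ := h
  refine le_antisymm (le_min hxa (hx.le.trans hDb)) ?_
  rcases hsat with hsat | hsat
  · exact hsat ▸ min_le_left _ _
  · exact (hx.trans hsat) ▸ min_le_right _ _

namespace Freeway

variable (fw : Freeway) {i : ℕ}

lemma Fcap_pos (i : ℕ) : 0 < fw.Fcap i :=
  pos_of_mul_pos_right ((fw.hFd i).1.trans_le (fw.hFd i).2) (fw.hbeta i).1.le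

lemma betaf_mul_v_ne_zero (i : ℕ) : fw.betaf i * fw.v i ≠ 0 :=
  (mul_pos (fw.hbeta i).1 (fw.hv i)).ne'

variable {fw}

lemma v_mul_lt_Fcap {x : ℝ} (h : fw.betaf i * fw.v i * x < fw.Fd i) :
    fw.v i * x < fw.Fcap i := by
  refine lt_of_mul_lt_mul_left ?_ (fw.hbeta i).1.le
  rw [← mul_assoc]
  exact h.trans_le (fw.hFd i).2

lemma le_Fcap_div_v {x : ℝ} (h : fw.v i * x ≤ fw.Fcap i) : x ≤ fw.Fcap i / fw.v i := by
  rw [le_div_iff₀ (fw.hv i), mul_comm]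
  exact h

lemma le_Nmax {x : ℝ} (h : fw.v i * x ≤ fw.Fcap i) : x ≤ fw.Nmax i := by
  have := div_pos (fw.Fcap_pos i) (fw.hw i)
  linarith [le_Fcap_div_v h, fw.hN i]

lemma fsup_eq_Fcap {n : ℕ → ℝ} (h : fw.v i * n i ≤ fw.Fcap i) : fsup fw n i = fw.Fcap i := by
  refine min_eq_right ?_
  rw [← div_le_iff₀' (fw.hw i)]
  linarith [le_Fcap_div_v h, fw.hN i]

lemma eq_v_mul_of_betaf_mul_eq {a x : ℝ} (h : fw.betaf i * a = fw.betaf i * fw.v i * x) :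
    a = fw.v i * x :=
  mul_left_cancel₀ (fw.hbeta i).1.ne' (h.trans (mul_assoc _ _ _))

lemma betaf_mul_v_mul_eq_of_eq_fdem {n : ℕ → ℝ} {x : ℝ} (h : x = fdem fw n i)
    (hlt : x < fw.Fd i) : fw.betaf i * fw.v i * n i = x := by
  rcases min_choice (fw.betaf i * fw.v i * n i) (fw.Fd i) with hmin | hmin
  · rw [h, fdem, hmin]
  · rw [h, fdem, hmin] at hlt
    exact absurd hlt (lt_irrefl _)

end Freeway

open Freeway

section Flows

variable {fw : Freeway}

lemma rbar_of_le_K {i : ℕ} (h₁ : 1 ≤ i) (h₂ : i ≤ fw.K) : rbar fw i = min (fw.d i) (fw.R i) :=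
  if_pos ⟨h₁, h₂⟩

lemma rbar_K_succ : rbar fw (fw.K + 1) = 0 :=
  if_neg (by omega)

lemma rbar_nonneg (i : ℕ) : 0 ≤ rbar fw i := by
  unfold rbar
  split_ifs
  exacts [le_min (fw.hd i) (fw.hR i), le_rfl]

lemma flin_nonneg : ∀ i, 0 ≤ flin fw i
  | 0 => le_min fw.hfin fw.hF0
  | i + 1 => mul_nonneg (fw.hbeta (i + 1)).1.le (add_nonneg (flin_nonneg i) (rbar_nonneg _))

variable {f r : ℕ → ℝ}
  (hcons : ∀ i, 1 ≤ i → i ≤ fw.K + 1 → f i = fw.betaf i * (f (i - 1) + r i))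
include hcons

lemma flow_le_flin (h₀ : f 0 ≤ flin fw 0) (hr : ∀ i, 1 ≤ i → i ≤ fw.K + 1 → r i ≤ rbar fw i) :
    ∀ i, i ≤ fw.K + 1 → f i ≤ flin fw i
  | 0, _ => h₀
  | j + 1, hj => by
    rw [hcons (j + 1) (by omega) hj, flin]
    exact mul_le_mul_of_nonneg_left
      (add_le_add (flow_le_flin h₀ hr j (by omega)) (hr (j + 1) (by omega) hj))
      (fw.hbeta (j + 1)).1.le

lemma flow_eq_flin (h₀ : f 0 = flin fw 0) (hr : ∀ i, 1 ≤ i → i ≤ fw.K + 1 → r i = rbar fw i) :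
    ∀ i, i ≤ fw.K + 1 → f i = flin fw i
  | 0, _ => h₀
  | j + 1, hj => by
    rw [hcons (j + 1) (by omega) hj, Nat.add_sub_cancel, flin, flow_eq_flin h₀ hr j (by omega),
      hr (j + 1) (by omega) hj]

end Flows

section Equilibrium

variable {fw : Freeway} {n f r : ℕ → ℝ}

lemma node_flows_eq_demands {D : ℝ} {rdem : ℕ → ℝ} {i : ℕ}
    (hnode : (f (i - 1), r i) = mergeFlow D (rdem i) (fsup fw n i) (fw.pF i) (fw.pR i))
    (hcons : f i = fw.betaf i * (f (i - 1) + r i))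
    (hden : fw.betaf i * fw.v i * n i = f i) (hlt : f i < fw.Fd i) :
    f (i - 1) = D ∧ r i = rdem i := by
  have hfree : fw.v i * n i < fw.Fcap i := v_mul_lt_Fcap (hden ▸ hlt)
  have hsupply : f (i - 1) + r i < fsup fw n i := by
    rw [fsup_eq_Fcap hfree.le, eq_v_mul_of_betaf_mul_eq (hcons.symm.trans hden.symm)]
    exact hfree
  have hout := Prod.ext_iff.mp hnode
  dsimp only at hout
  rw [hout.1, hout.2] at hsupply
  rw [mergeFlow_eq_of_add_lt (fw.hp i).2.2 hsupply] at hnode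
  exact Prod.mk.inj hnode

section Ramps

variable {rdem : ℕ → ℝ}
  (hramp : ∀ i, 1 ≤ i → i ≤ fw.K →
    (r i = fw.d i ∨ rdem i = fw.R i) ∧ r i ≤ rdem i ∧ rdem i ≤ fw.R i ∧ r i ≤ fw.d i)
  (hrK : rdem (fw.K + 1) = 0)
include hramp hrK

lemma ramp_le_rbar (hlast : r (fw.K + 1) ≤ rdem (fw.K + 1)) :
    ∀ i, 1 ≤ i → i ≤ fw.K + 1 → r i ≤ rbar fw i := by
  intro i h₁ h₂
  rcases (show i ≤ fw.K ∨ i = fw.K + 1 by omega) with hi | rfl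
  · obtain ⟨-, hr, hR, hd⟩ := hramp i h₁ hi
    rw [rbar_of_le_K h₁ hi]
    exact le_min hd (hr.trans hR)
  · rw [rbar_K_succ, ← hrK]
    exact hlast

lemma ramp_eq_rbar (hserved : ∀ i, 1 ≤ i → i ≤ fw.K + 1 → r i = rdem i) :
    ∀ i, 1 ≤ i → i ≤ fw.K + 1 → r i = rbar fw i := by
  intro i h₁ h₂
  rcases (show i ≤ fw.K ∨ i = fw.K + 1 by omega) with hi | rfl
  · rw [rbar_of_le_K h₁ hi]
    exact eq_min_of_eq_demand (hramp i h₁ hi) (hserved i h₁ h₂)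
  · rw [rbar_K_succ, ← hrK]
    exact hserved _ h₁ h₂

end Ramps

lemma IsEquilibrium.le_flin (h : IsEquilibrium fw n f r) :
    ∀ i, i ≤ fw.K + 1 → f i ≤ flin fw i := by
  obtain ⟨fdem0, rdem, ⟨-, hf₀, hF₀, hfin⟩, hramp, hrK, -, hnode, hcons, -⟩ := h
  refine flow_le_flin hcons (le_min hfin (hf₀.trans hF₀)) (ramp_le_rbar hramp hrK ?_)
  exact (congrArg Prod.snd (hnode (fw.K + 1) (by omega) le_rfl)).trans_le mergeFlow_snd_le

lemma IsEquilibrium.betaf_mul_v_mul_eq_flin (h : IsEquilibrium fw n f r)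
    (hfeas : ∀ i, 1 ≤ i → i ≤ fw.K + 1 → flin fw i < fw.Fd i) :
    ∀ i, 1 ≤ i → i ≤ fw.K + 1 → fw.betaf i * fw.v i * n i = flin fw i := by
  have hlt : ∀ i, 1 ≤ i → i ≤ fw.K + 1 → f i < fw.Fd i := fun i h₁ h₂ =>
    (h.le_flin i h₂).trans_lt (hfeas i h₁ h₂)
  obtain ⟨fdem0, rdem, hent, hramp, hrK, -, hnode, hcons, -, hexit⟩ := h
  have hserved : ∀ i, 1 ≤ i → i ≤ fw.K + 1 → fw.betaf i * fw.v i * n i = f i →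
      f (i - 1) = (if i = 1 then fdem0 else fdem fw n (i - 1)) ∧ r i = rdem i :=
    fun i h₁ h₂ hden => node_flows_eq_demands (hnode i h₁ h₂) (hcons i h₁ h₂) hden (hlt i h₁ h₂)
  have hdemand : ∀ i, 1 ≤ i → i ≤ fw.K + 1 → f i = fdem fw n i := by
    intro i h₁ h₂
    induction h₂ using Nat.decreasingInduction with
    | self => exact hexit
    | of_succ k hk ih =>
      have hden := betaf_mul_v_mul_eq_of_eq_fdem (ih (by omega)) (hlt _ (by omega) hk)
      have hup := (hserved (k + 1) (by omega) hk hden).1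
      rwa [if_neg (by omega), Nat.add_sub_cancel] at hup
  have hden : ∀ i, 1 ≤ i → i ≤ fw.K + 1 → fw.betaf i * fw.v i * n i = f i :=
    fun i h₁ h₂ => betaf_mul_v_mul_eq_of_eq_fdem (hdemand i h₁ h₂) (hlt i h₁ h₂)
  have hf₀ : f 0 = flin fw 0 := by
    refine eq_min_of_eq_demand hent ?_
    simpa using (hserved 1 le_rfl (by omega) (hden 1 le_rfl (by omega))).1
  have hr := ramp_eq_rbar hramp hrK fun i h₁ h₂ => (hserved i h₁ h₂ (hden i h₁ h₂)).2
  intro i h₁ h₂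
  rw [hden i h₁ h₂, flow_eq_flin hcons hf₀ hr i h₂]

end Equilibrium

section Uncongested

variable {fw : Freeway} {i : ℕ}

/-- The uncongested density vector `n^u`. -/
noncomputable def uncongestedDensity (fw : Freeway) (i : ℕ) : ℝ :=
  flin fw i / (fw.betaf i * fw.v i)

lemma betaf_mul_v_mul_uncongestedDensity (fw : Freeway) (i : ℕ) :
    fw.betaf i * fw.v i * uncongestedDensity fw i = flin fw i :=
  mul_div_cancel₀ _ (fw.betaf_mul_v_ne_zero i)

lemma v_mul_uncongestedDensity_lt_Fcap (h : flin fw i < fw.Fd i) :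
    fw.v i * uncongestedDensity fw i < fw.Fcap i :=
  v_mul_lt_Fcap ((betaf_mul_v_mul_uncongestedDensity fw i).symm ▸ h)

lemma fdem_uncongestedDensity (h : flin fw i < fw.Fd i) :
    fdem fw (uncongestedDensity fw) i = flin fw i := by
  rw [fdem, betaf_mul_v_mul_uncongestedDensity, min_eq_left h.le]

lemma isEquilibrium_uncongested (hfeas : ∀ i, 1 ≤ i → i ≤ fw.K + 1 → flin fw i < fw.Fd i) :
    IsEquilibrium fw (uncongestedDensity fw) (flin fw) (rbar fw) := by
  have hlast := hfeas (fw.K + 1) (by omega) le_rfl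
  refine ⟨min fw.fin fw.F0, rbar fw,
    ⟨min_choice _ _, le_rfl, min_le_right _ _, min_le_left _ _⟩, ?_, rbar_K_succ, ?_, ?_, ?_,
    (v_mul_uncongestedDensity_lt_Fcap hlast).le, (fdem_uncongestedDensity hlast).symm⟩
  · intro i h₁ h₂
    rw [rbar_of_le_K h₁ h₂]
    exact ⟨min_choice _ _, le_rfl, min_le_right _ _, min_le_left _ _⟩
  · intro i h₁ h₂
    exact ⟨div_nonneg (flin_nonneg i) (mul_pos (fw.hbeta i).1 (fw.hv i)).le,
      le_Nmax (v_mul_uncongestedDensity_lt_Fcap (hfeas i h₁ h₂)).le⟩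
  · intro i h₁ h₂
    obtain ⟨j, rfl⟩ : ∃ j, i = j + 1 := ⟨i - 1, by omega⟩
    have hdemand : (if j + 1 = 1 then min fw.fin fw.F0
        else fdem fw (uncongestedDensity fw) (j + 1 - 1)) = flin fw j := by
      rcases j with _ | j
      · rfl
      · rw [if_neg (by omega), Nat.add_sub_cancel,
          fdem_uncongestedDensity (hfeas _ (by omega) (by omega))]
    have hfree := v_mul_uncongestedDensity_lt_Fcap (hfeas (j + 1) h₁ h₂)
    have hinflow : flin fw j + rbar fw (j + 1) = fw.v (j + 1) * uncongestedDensity fw (j + 1) :=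
      eq_v_mul_of_betaf_mul_eq (betaf_mul_v_mul_uncongestedDensity fw (j + 1)).symm
    rw [hdemand, Nat.add_sub_cancel, mergeFlow, if_pos]
    rw [fsup_eq_Fcap hfree.le, hinflow]
    exact hfree.le
  · intro i h₁ h₂
    obtain ⟨j, rfl⟩ : ∃ j, i = j + 1 := ⟨i - 1, by omega⟩
    rfl

lemma IsEquilibrium.eq_uncongestedDensity {n f r : ℕ → ℝ} (h : IsEquilibrium fw n f r)
    (hfeas : ∀ i, 1 ≤ i → i ≤ fw.K + 1 → flin fw i < fw.Fd i) (h₁ : 1 ≤ i) (h₂ : i ≤ fw.K + 1) :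
    n i = uncongestedDensity fw i :=
  eq_div_of_mul_eq (fw.betaf_mul_v_ne_zero i)
    ((mul_comm _ _).trans (h.betaf_mul_v_mul_eq_flin hfeas i h₁ h₂))

end Uncongested

/-- If the incoming flow is strictly feasible, i.e. `f_i(f̄_0, r̄) < F_i^d`
for all `i = 1,…,K+1`, then the set of equilibrium density vectors consists
of the single uncongested vector `n^u`, `n_i^u = f̄_i / (β_i^f v_i)`:
every equilibrium has these densities, and such an equilibrium exists. -/
theorem strictly_feasible_unique_equilibrium_densities
    (fw : Freeway)
    (hfeas : ∀ i, 1 ≤ i → i ≤ fw.K + 1 → flin fw i < fw.Fd i) :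
    (∀ n f r, IsEquilibrium fw n f r →
      ∀ i, 1 ≤ i → i ≤ fw.K + 1 → n i = flin fw i / (fw.betaf i * fw.v i)) ∧
    (∃ n f r, IsEquilibrium fw n f r ∧
      ∀ i, 1 ≤ i → i ≤ fw.K + 1 → n i = flin fw i / (fw.betaf i * fw.v i)) :=
  ⟨fun _ _ _ h _ h₁ h₂ => h.eq_uncongestedDensity hfeas h₁ h₂,
    ⟨_, _, _, isEquilibrium_uncongested hfeas, fun _ _ _ => rfl⟩⟩
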